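/- Generalized Taylor formula: if f is an F_q-linear polynomial of degree ≤ q^n and {P_l} is the basic sequence of a delta operator δ, then f(st) = Σ_{l=0}^{n} ((δ_0^{(l)} f)(s) / D_l) P_l(t) for all s, t ∈ K. -/

import Mathlib

/-!
The operator `τ^l δ^l` is diagonal on the monomials `t^{q^k}`, with eigenvalues
`γ_{l,k} = c_k c_{k-1}^q ⋯ c_{k-l+1}^{q^{l-1}}`; hence
`B_l u := (τ^l δ^l u)(1) = Σ_k γ_{l,k} u_k` is `L`-linear. Since `δ P_{m+1} = [m+1]^{1/q} P_m`
and `B_{l+1} u = (B_l (δ u))^q`, induction gives `B_l P_m = D_l` if `l = m` and `0` otherwise.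
The `P_l` are triangular with non-zero diagonal, so a polynomial `u` of degree `≤ q^n` is a
combination of `P_0, …, P_n`, and applying `B_l` identifies the coefficients:
`u = Σ_{l ≤ n} (B_l u / D_l) P_l`. For `u(t) = f(st)` one has
`B_l u = Σ_k γ_{l,k} f_k s^{q^k} = (τ^l δ^l f)(s)`; evaluating at `t` gives the formula.
-/

noncomputable section

/-- `[i] = x^{q^i} - x`. -/
def brk {K : Type*} [CommRing K] (q : ℕ) (x : K) (i : ℕ) : K := x ^ q ^ i - x

/-- Carlitz factorial: `D_0 = 1`, `D_i = [i] D_{i-1}^q`. -/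
def Dfac {K : Type*} [CommRing K] (q : ℕ) (x : K) : ℕ → K
  | 0 => 1
  | i + 1 => brk q x (i + 1) * (Dfac q x i) ^ q

/-- The Frobenius `τ` on `F_q`-linear polynomials `Σ a_k t^{q^k}` (encoded as `ℕ →₀ L`). -/
def frob {L : Type*} [CommRing L] (q : ℕ) (u : ℕ →₀ L) : ℕ →₀ L :=
  u.sum fun k a => Finsupp.single (k + 1) (a ^ q)

/-- Evaluation of the `F_q`-linear polynomial `Σ a_k t^{q^k}` at `t = 1`. -/
def eval1 {L : Type*} [CommRing L] (u : ℕ →₀ L) : L :=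
  u.sum fun _ a => a

/-- Evaluation of the `F_q`-linear polynomial `Σ a_k t^{q^k}` at a point `t`. -/
def evp {L : Type*} [CommRing L] (q : ℕ) (u : ℕ →₀ L) (t : L) : L :=
  u.sum fun k a => a * t ^ q ^ k


open Finsupp Finset

section Frobenius

variable {L : Type*} [CommRing L] {q : ℕ}

theorem frob_eq_mapDomain (hq : q ≠ 0) (u : ℕ →₀ L) :
    frob q u = mapDomain Nat.succ (mapRange (· ^ q) (zero_pow hq) u) := by
  rw [frob, mapDomain, sum_mapRange_index fun _ => single_zero _]

theorem frob_apply_zero (u : ℕ →₀ L) : frob q u 0 = 0 := by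
  rw [frob, Finsupp.sum_apply]
  exact Finset.sum_eq_zero fun k _ => single_eq_of_ne (Nat.succ_ne_zero k).symm

theorem frob_apply_succ (hq : q ≠ 0) (u : ℕ →₀ L) (j : ℕ) :
    frob q u (j + 1) = u j ^ q := by
  rw [frob_eq_mapDomain hq, mapDomain_apply Nat.succ_injective, mapRange_apply]

theorem frob_smul (hq : q ≠ 0) (r : L) (u : ℕ →₀ L) :
    frob q (r • u) = r ^ q • frob q u := by
  ext (_ | j)
  · simp [frob_apply_zero]
  · simp [frob_apply_succ hq, mul_pow]

theorem frob_injective (hq : q ≠ 0) (h : Function.Injective fun a : L => a ^ q) :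
    Function.Injective (frob q : (ℕ →₀ L) → ℕ →₀ L) := fun u v huv => by
  ext j
  exact h (by simpa only [frob_apply_succ hq] using DFunLike.congr_fun huv (j + 1))

theorem eval1_frob {p : ℕ} [ExpChar L p] (e : ℕ) (u : ℕ →₀ L) :
    eval1 (frob (p ^ e) u) = eval1 u ^ p ^ e := by
  have hq : p ^ e ≠ 0 := (expChar_pow_pos L p e).ne'
  rw [frob_eq_mapDomain hq, eval1, sum_mapDomain_index (fun _ => rfl) fun _ _ _ => rfl,
    sum_mapRange_index fun _ => rfl, eval1, ← iterateFrobenius_def, map_finsuppSum]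
  rfl

end Frobenius

theorem Finsupp.pointwise_smul_single {α R : Type*} [Semiring R] (g : α → R) (k : α) (a : R) :
    g • single k a = single k (g k * a) := by
  classical
  ext j
  by_cases h : k = j <;> simp [coe_pointwise_smul, h]

theorem Finsupp.linearCombination_pointwise_smul {α R : Type*} [CommSemiring R] (v g : α → R)
    (u : α →₀ R) : linearCombination R v (g • u) = linearCombination R (g * v) u := by
  induction u using Finsupp.induction_linear with
  | zero => simp
  | add u w hu hw => rw [smul_add, map_add, map_add, hu, hw]
  | single k a =>
    rw [pointwise_smul_single, linearCombination_single, linearCombination_single, smul_eq_mul,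
      smul_eq_mul, Pi.mul_apply, mul_left_comm, mul_assoc]

theorem LinearMap.eq_pointwise_smul_of_apply_single {α R : Type*} [CommSemiring R]
    {T : (α →₀ R) →ₗ[R] α →₀ R} {c : α → R}
    (h : ∀ n, T (Finsupp.single n 1) = c n • Finsupp.single n 1)
    (u : α →₀ R) : T u = c • u := by
  induction u using Finsupp.induction_linear with
  | zero => simp
  | add u w hu hw => rw [map_add, hu, hw, smul_add]
  | single k a =>
    calc T (Finsupp.single k a) = a • T (Finsupp.single k 1) := by
          rw [← map_smul, smul_single_one]
      _ = c • Finsupp.single k a := by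
        rw [h, pointwise_smul_single, smul_single_one, smul_single, smul_eq_mul, mul_comm]

theorem eval1_eq_linearCombination {L : Type*} [CommRing L] (u : ℕ →₀ L) :
    eval1 u = linearCombination L 1 u :=
  Finsupp.sum_congr fun _ _ => (mul_one _).symm

theorem evp_eq_linearCombination {L : Type*} [CommRing L] (q : ℕ) (u : ℕ →₀ L) (t : L) :
    evp q u t = linearCombination L (fun k => t ^ q ^ k) u :=
  rfl

section Iterates

variable {L : Type*} [CommRing L]

/-- The eigenvalue of `τ^l δ^l` on `t^{q^k}` when `τ δ` has eigenvalues `c`. -/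
def iterEigenvalue (q : ℕ) (c : ℕ → L) : ℕ → ℕ → L
  | 0, _ => 1
  | _ + 1, 0 => 0
  | l + 1, k + 1 => c (k + 1) * iterEigenvalue q c l k ^ q

variable {q : ℕ} {c : ℕ → L} {δ : (ℕ →₀ L) → ℕ →₀ L}

theorem frob_iterate_delta_iterate (hq : q ≠ 0) (hδ : ∀ u, frob q (δ u) = c • u) (l : ℕ)
    (u : ℕ →₀ L) : (frob q)^[l] (δ^[l] u) = iterEigenvalue q c l • u := by
  induction l generalizing u with
  | zero => ext k; simp [iterEigenvalue, coe_pointwise_smul]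
  | succ l ih =>
    rw [Function.iterate_succ_apply δ, Function.iterate_succ_apply' (frob q)]
    ext (_ | k)
    · simp [frob_apply_zero, coe_pointwise_smul, iterEigenvalue]
    · have hδk : δ u k ^ q = c (k + 1) * u (k + 1) := by
        rw [← frob_apply_succ hq, hδ, coe_pointwise_smul, Pi.smul_apply', smul_eq_mul]
      rw [frob_apply_succ hq, ih,
        coe_pointwise_smul, coe_pointwise_smul, Pi.smul_apply', Pi.smul_apply', smul_eq_mul,
        smul_eq_mul, mul_pow, hδk, iterEigenvalue]
      ring

theorem eval1_frob_iterate_delta_iterate (hq : q ≠ 0) (hδ : ∀ u, frob q (δ u) = c • u)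
    (l : ℕ) (u : ℕ →₀ L) :
    eval1 ((frob q)^[l] (δ^[l] u)) = linearCombination L (iterEigenvalue q c l) u := by
  rw [frob_iterate_delta_iterate hq hδ, eval1_eq_linearCombination,
    linearCombination_pointwise_smul, mul_one]

theorem linearCombination_iterEigenvalue_succ {p : ℕ} [ExpChar L p] {e : ℕ}
    (hδ : ∀ u, frob (p ^ e) (δ u) = c • u) (l : ℕ) (u : ℕ →₀ L) :
    linearCombination L (iterEigenvalue (p ^ e) c (l + 1)) u
      = linearCombination L (iterEigenvalue (p ^ e) c l) (δ u) ^ p ^ e := by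
  have hq : p ^ e ≠ 0 := (expChar_pow_pos L p e).ne'
  rw [← eval1_frob_iterate_delta_iterate hq hδ, ← eval1_frob_iterate_delta_iterate hq hδ,
    Function.iterate_succ_apply δ, Function.iterate_succ_apply' (frob (p ^ e)), eval1_frob]

end Iterates

theorem linearCombination_iterEigenvalue_basicSeq {L : Type*} [Field L] {p : ℕ} [ExpChar L p]
    [PerfectRing L p] {e : ℕ} {c : ℕ → L} {δ : (ℕ →₀ L) → ℕ →₀ L}
    (hδ : ∀ u, frob (p ^ e) (δ u) = c • u) (X : L) {P : ℕ → ℕ →₀ L}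
    (hP01 : eval1 (P 0) = 1) (hP1 : ∀ n, eval1 (P (n + 1)) = 0)
    (hP0 : frob (p ^ e) (δ (P 0)) = 0)
    (hPsucc : ∀ n, frob (p ^ e) (δ (P (n + 1))) = brk (p ^ e) X (n + 1) • frob (p ^ e) (P n))
    (l n : ℕ) :
    linearCombination L (iterEigenvalue (p ^ e) c l) (P n)
      = if l = n then Dfac (p ^ e) X l else 0 := by
  have hq : p ^ e ≠ 0 := (expChar_pow_pos L p e).ne'
  have hfrob_inj := frob_injective (L := L) hq (bijective_iterateFrobenius L p e).injective
  induction l generalizing n with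
  | zero =>
    rw [← eval1_frob_iterate_delta_iterate hq hδ]
    cases n with
    | zero => simp [hP01, Dfac]
    | succ n => simp [hP1]
  | succ l ih =>
    rw [linearCombination_iterEigenvalue_succ hδ]
    cases n with
    | zero =>
      have hδP : δ (P 0) = 0 := hfrob_inj (hP0.trans sum_zero_index.symm)
      rw [hδP, map_zero, zero_pow hq, if_neg l.succ_ne_zero]
    | succ n =>
      set r := (iterateFrobeniusEquiv L p e).symm (brk (p ^ e) X (n + 1))
      have hr : r ^ p ^ e = brk (p ^ e) X (n + 1) :=
        (iterateFrobeniusEquiv L p e).apply_symm_apply _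
      have hδP : δ (P (n + 1)) = r • P n := hfrob_inj (by rw [hPsucc, frob_smul hq, hr])
      rw [hδP, map_smul, ih, smul_eq_mul, mul_pow, hr]
      by_cases hln : l = n
      · simp [hln, Dfac]
      · rw [if_neg hln, if_neg (by omega), zero_pow hq, mul_zero]

theorem Finsupp.exists_eq_sum_smul_of_triangular {K : Type*} [Field K] {P : ℕ → ℕ →₀ K}
    (hPdiag : ∀ n, P n n ≠ 0) (hPdeg : ∀ n k, n < k → P n k = 0) (n : ℕ) (u : ℕ →₀ K)
    (hu : ∀ k, n ≤ k → u k = 0) : ∃ a : ℕ → K, u = ∑ l ∈ range n, a l • P l := by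
  induction n generalizing u with
  | zero => exact ⟨0, by ext k; simp [hu k k.zero_le]⟩
  | succ n ih =>
    obtain ⟨a, ha⟩ := ih (u - (u n / P n n) • P n) fun k hk => by
      rcases hk.eq_or_lt with rfl | hk
      · simp [hPdiag]
      · simp [hu k hk, hPdeg n k hk]
    refine ⟨Function.update a n (u n / P n n), ?_⟩
    rw [sum_range_succ, Function.update_self,
      Finset.sum_congr rfl fun l hl => by rw [Function.update_of_ne (mem_range.mp hl).ne], ← ha,
      sub_add_cancel]

theorem eq_sum_div_smul_of_biorthogonal {ι K V : Type*} [DecidableEq ι] [Field K]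
    [AddCommGroup V] [Module K V] {P : ι → V} {B : ι → V →ₗ[K] K} {d : ι → K}
    (hd : ∀ l, d l ≠ 0) (hB : ∀ l m, B l (P m) = if l = m then d l else 0) {s : Finset ι}
    {u : V} {a : ι → K} (hu : u = ∑ l ∈ s, a l • P l) :
    u = ∑ l ∈ s, (B l u / d l) • P l := by
  have hBu : ∀ l ∈ s, B l u = a l * d l := fun l hl => by
    simp [hu, hB, hl]
  conv_lhs => rw [hu]
  exact Finset.sum_congr rfl fun l hl => by rw [hBu l hl, mul_div_cancel_right₀ _ (hd l)]

section CarlitzFactorial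

variable {K : Type*} [CommRing K]

theorem map_brk {K' : Type*} [CommRing K'] (φ : K →+* K') (q : ℕ) (x : K) (i : ℕ) :
    φ (brk q x i) = brk q (φ x) i := by
  simp [brk]

theorem map_Dfac {K' : Type*} [CommRing K'] (φ : K →+* K') (q : ℕ) (x : K) (l : ℕ) :
    φ (Dfac q x l) = Dfac q (φ x) l := by
  induction l with
  | zero => simp [Dfac]
  | succ l ih => simp [Dfac, map_brk, ih]

theorem Dfac_ne_zero [IsDomain K] {q : ℕ} {x : K} (h : ∀ i, brk q x (i + 1) ≠ 0) (l : ℕ) :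
    Dfac q x l ≠ 0 := by
  induction l with
  | zero => exact one_ne_zero
  | succ l ih => exact mul_ne_zero (h l) (pow_ne_zero _ ih)

theorem brk_single_one_ne_zero {R : Type*} [CommRing R] [Nontrivial R] {q : ℕ} (hq : 2 ≤ q)
    (i : ℕ) : brk q (HahnSeries.single (1 : ℤ) (1 : R)) (i + 1) ≠ 0 := by
  have hqi : (1 : ℤ) ≠ q ^ (i + 1) • 1 := by
    rw [nsmul_one]
    exact_mod_cast (Nat.one_lt_pow i.succ_ne_zero hq).ne
  rw [brk, sub_ne_zero, HahnSeries.single_pow, one_pow]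
  intro h
  have h1 := congrArg (HahnSeries.coeff · 1) h
  simp only [HahnSeries.coeff_single_of_ne hqi, HahnSeries.coeff_single_same] at h1
  exact zero_ne_one h1

end CarlitzFactorial

theorem evp_mul {L : Type*} [CommRing L] (q : ℕ) (u : ℕ →₀ L) (s t : L) :
    evp q u (s * t) = evp q ((fun k => s ^ q ^ k) • u) t := by
  simp only [evp_eq_linearCombination, linearCombination_pointwise_smul, Pi.mul_def, mul_pow]

theorem generalized_taylor_general {F L : Type*} [Field F] [Fintype F] [Field L]
    [Algebra (LaurentSeries F) L]
    (p : ℕ) [CharP F p] [ExpChar L p] [PerfectRing L p]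
    (q : ℕ) (hq : q = Fintype.card F)
    (c : ℕ → L)
    (δ₀ : (ℕ →₀ L) →ₗ[L] (ℕ →₀ L))
    (hδ₀ : ∀ n : ℕ, δ₀ (Finsupp.single n 1) = c n • Finsupp.single n 1)
    (δ : (ℕ →₀ L) → (ℕ →₀ L)) (hδ : ∀ u, frob q (δ u) = δ₀ u)
    (P : ℕ → (ℕ →₀ L))
    (hPdeg : ∀ n : ℕ, P n n ≠ 0 ∧ ∀ k, n < k → P n k = 0)
    (hP01 : eval1 (P 0) = 1) (hP1 : ∀ n, 1 ≤ n → eval1 (P n) = 0)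
    (hP0 : δ₀ (P 0) = 0)
    (hPn : ∀ n, 1 ≤ n →
      δ₀ (P n)
        = algebraMap (LaurentSeries F) L
            (brk q (HahnSeries.single (1 : ℤ) (1 : F)) n) • frob q (P (n - 1)))
    (f : ℕ →₀ L) (n : ℕ) (hf : ∀ k, n < k → f k = 0) :
    ∀ s t : LaurentSeries F,
      evp q f (algebraMap (LaurentSeries F) L (s * t))
        = ∑ l ∈ Finset.range (n + 1),
            evp q ((frob q)^[l] (δ^[l] f)) (algebraMap (LaurentSeries F) L s)
              / algebraMap (LaurentSeries F) L
                  (Dfac q (HahnSeries.single (1 : ℤ) (1 : F)) l)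
              * evp q (P l) (algebraMap (LaurentSeries F) L t) := by
  obtain ⟨e, -, hcard⟩ := FiniteField.card F p
  have hq2 : 2 ≤ q := hq ▸ Fintype.one_lt_card
  rw [hcard] at hq
  subst hq
  set q := p ^ (e : ℕ)
  intro s t
  set φ := algebraMap (LaurentSeries F) L
  set x : LaurentSeries F := HahnSeries.single 1 1
  have hδc (u : ℕ →₀ L) : frob q (δ u) = c • u :=
    (hδ u).trans (δ₀.eq_pointwise_smul_of_apply_single hδ₀ u)
  have hbasic := linearCombination_iterEigenvalue_basicSeq hδc (φ x) hP01
    (fun n => hP1 _ n.succ_pos) (by rw [hδ, hP0])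
    (fun n => by rw [hδ, hPn _ n.succ_pos, map_brk]; rfl)
  have hD (l : ℕ) : Dfac q (φ x) l ≠ 0 := by
    rw [← map_Dfac]
    exact (map_ne_zero φ).2 (Dfac_ne_zero (brk_single_one_ne_zero hq2) l)
  obtain ⟨a, ha⟩ := exists_eq_sum_smul_of_triangular (fun n => (hPdeg n).1)
    (fun n => (hPdeg n).2) (n + 1) ((fun k => φ s ^ q ^ k) • f)
    (fun k hk => by simp [coe_pointwise_smul, hf k hk])
  rw [map_mul, evp_mul, eq_sum_div_smul_of_biorthogonal hD hbasic ha, evp_eq_linearCombination,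
    map_sum]
  refine Finset.sum_congr rfl fun l _ => ?_
  rw [frob_iterate_delta_iterate (expChar_pow_pos L p e).ne' hδc, map_smul, smul_eq_mul,
    map_Dfac, evp_eq_linearCombination, evp_eq_linearCombination, linearCombination_pointwise_smul,
    linearCombination_pointwise_smul, mul_comm (iterEigenvalue q c l)]

/-- Generalized Taylor formula: if `f` is an `F_q`-linear polynomial of degree `≤ q^n` and
`{P_l}` is the basic sequence of the delta operator `δ = τ^{-1}δ₀`, then
`f(st) = Σ_{l=0}^{n} ((δ₀^{(l)} f)(s) / D_l) P_l(t)` for all `s, t ∈ K`,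
where `δ₀^{(l)} = τ^l δ^l`. -/
theorem generalized_taylor {F L : Type*} [Field F] [Fintype F] [Field L]
    [Algebra (LaurentSeries F) L]
    (p : ℕ) [Fact p.Prime] [CharP F p] [ExpChar L p] [PerfectRing L p]
    (q : ℕ) (hq : q = Fintype.card F)
    (c : ℕ → L) (hc0 : c 0 = 0) (hc : ∀ n, 1 ≤ n → c n ≠ 0)
    (δ₀ : (ℕ →₀ L) →ₗ[L] (ℕ →₀ L))
    (hδ₀ : ∀ n : ℕ, δ₀ (Finsupp.single n 1) = c n • Finsupp.single n 1)
    (δ : (ℕ →₀ L) → (ℕ →₀ L)) (hδ : ∀ u, frob q (δ u) = δ₀ u)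
    (P : ℕ → (ℕ →₀ L))
    (hPdeg : ∀ n : ℕ, P n n ≠ 0 ∧ ∀ k, n < k → P n k = 0)
    (hP01 : eval1 (P 0) = 1) (hP1 : ∀ n, 1 ≤ n → eval1 (P n) = 0)
    (hP0 : δ₀ (P 0) = 0)
    (hPn : ∀ n, 1 ≤ n →
      δ₀ (P n)
        = algebraMap (LaurentSeries F) L
            (brk q (HahnSeries.single (1 : ℤ) (1 : F)) n) • frob q (P (n - 1)))
    (f : ℕ →₀ L) (n : ℕ) (hf : ∀ k, n < k → f k = 0) :
    ∀ s t : LaurentSeries F,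
      evp q f (algebraMap (LaurentSeries F) L (s * t))
        = ∑ l ∈ Finset.range (n + 1),
            evp q ((frob q)^[l] (δ^[l] f)) (algebraMap (LaurentSeries F) L s)
              / algebraMap (LaurentSeries F) L
                  (Dfac q (HahnSeries.single (1 : ℤ) (1 : F)) l)
              * evp q (P l) (algebraMap (LaurentSeries F) L t) :=
  generalized_taylor_general p q hq c δ₀ hδ₀ δ hδ P hPdeg hP01 hP1 hP0 hPn f n hf
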